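/- arXiv:2112.14224 — 4 statements merged into one kernel-verified Lean document; each statement's English description precedes it below -/
import Mathlib

section
/- Let (E, 𝓔) be a measurable space and κ a Markov kernel on E satisfying a Doeblin minorization with constant c > 0 and nonzero finite measure λ. Then for every bounded measurable f : E → ℝ and all x₁, x₂ ∈ E, |(κ f)(x₁) − (κ f)(x₂)| ≤ (1 − c·λ(E)) · osc(f), where necessarily 0 ≤ c·λ(E) ≤ 1. -/
open MeasureTheory ProbabilityTheory
open scoped ENNReal NNReal

/-! Split each `κ xᵢ` as `(κ xᵢ - c·λ) + c·λ`. The common part `c·λ` contributes the same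
integral at `x₁` and at `x₂`, and the two residual measures have mass `1 - c·λ(E)`, so their
integrals of `f` differ by at most `(1 - c·λ(E)) · osc f`. -/

namespace MeasureTheory

variable {α : Type*} [MeasurableSpace α] {μ μ₁ μ₂ ν : Measure α} {f : α → ℝ} {I S : ℝ}

lemma integrable_of_forall_le_of_le [IsFiniteMeasure μ] (hf : Measurable f)
    (hI : ∀ x, I ≤ f x) (hS : ∀ x, f x ≤ S) : Integrable f μ :=
  (integrable_const (max |I| |S|)).mono' hf.aestronglyMeasurable
    (ae_of_all _ fun x => abs_le_max_abs_abs (hI x) (hS x))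

lemma integral_le_measureReal_univ_mul [IsFiniteMeasure μ] (hf : Integrable f μ)
    (hS : ∀ x, f x ≤ S) : ∫ x, f x ∂μ ≤ μ.real Set.univ * S :=
  calc ∫ x, f x ∂μ ≤ ∫ _, S ∂μ := integral_mono hf (integrable_const S) hS
    _ = μ.real Set.univ * S := by rw [integral_const, smul_eq_mul]

lemma measureReal_univ_mul_le_integral [IsFiniteMeasure μ] (hf : Integrable f μ)
    (hI : ∀ x, I ≤ f x) : μ.real Set.univ * I ≤ ∫ x, f x ∂μ :=
  calc μ.real Set.univ * I = ∫ _, I ∂μ := by rw [integral_const, smul_eq_mul]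
    _ ≤ ∫ x, f x ∂μ := integral_mono (integrable_const I) hf hI

lemma integral_eq_integral_sub_add_integral [IsFiniteMeasure μ] (hνμ : ν ≤ μ)
    (hf : Integrable f μ) : ∫ x, f x ∂μ = ∫ x, f x ∂(μ - ν) + ∫ x, f x ∂ν := by
  have : IsFiniteMeasure ν := isFiniteMeasure_of_le μ hνμ
  conv_lhs => rw [← Measure.sub_add_cancel_of_le hνμ]
  exact integral_add_measure (hf.mono_measure Measure.sub_le) (hf.mono_measure hνμ)

lemma measureReal_sub_univ [IsProbabilityMeasure μ] (hνμ : ν ≤ μ) :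
    (μ - ν).real Set.univ = 1 - ν.real Set.univ := by
  have : IsFiniteMeasure ν := isFiniteMeasure_of_le μ hνμ
  rw [measureReal_def, Measure.sub_apply MeasurableSet.univ hνμ,
    ENNReal.toReal_sub_of_le (hνμ _) (measure_ne_top _ _), ← measureReal_def, ← measureReal_def,
    probReal_univ]

lemma integral_sub_integral_le_of_le_of_le [IsProbabilityMeasure μ₁] [IsProbabilityMeasure μ₂]
    (h₁ : ν ≤ μ₁) (h₂ : ν ≤ μ₂) (hf : Measurable f) (hI : ∀ x, I ≤ f x) (hS : ∀ x, f x ≤ S) :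
    ∫ x, f x ∂μ₁ - ∫ x, f x ∂μ₂ ≤ (1 - ν.real Set.univ) * (S - I) := by
  have : IsFiniteMeasure (μ₁ - ν) := isFiniteMeasure_of_le μ₁ Measure.sub_le
  have : IsFiniteMeasure (μ₂ - ν) := isFiniteMeasure_of_le μ₂ Measure.sub_le
  have upper := integral_le_measureReal_univ_mul
    (integrable_of_forall_le_of_le (μ := μ₁ - ν) hf hI hS) hS
  have lower := measureReal_univ_mul_le_integral
    (integrable_of_forall_le_of_le (μ := μ₂ - ν) hf hI hS) hI
  rw [measureReal_sub_univ h₁] at upper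
  rw [measureReal_sub_univ h₂] at lower
  rw [integral_eq_integral_sub_add_integral h₁ (integrable_of_forall_le_of_le hf hI hS),
    integral_eq_integral_sub_add_integral h₂ (integrable_of_forall_le_of_le hf hI hS)]
  linarith

lemma abs_integral_sub_integral_le_of_le_of_le [IsProbabilityMeasure μ₁]
    [IsProbabilityMeasure μ₂] (h₁ : ν ≤ μ₁) (h₂ : ν ≤ μ₂) (hf : Measurable f)
    (hI : ∀ x, I ≤ f x) (hS : ∀ x, f x ≤ S) :
    |∫ x, f x ∂μ₁ - ∫ x, f x ∂μ₂| ≤ (1 - ν.real Set.univ) * (S - I) :=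
  abs_sub_le_iff.2 ⟨integral_sub_integral_le_of_le_of_le h₁ h₂ hf hI hS,
    integral_sub_integral_le_of_le_of_le h₂ h₁ hf hI hS⟩

end MeasureTheory

theorem stmt1_general {E : Type*} [MeasurableSpace E]
    (κ : Kernel E E) [IsMarkovKernel κ]
    (c : ℝ≥0)
    (lam : Measure E)
    (hdoeblin : ∀ (x : E) (B : Set E), MeasurableSet B → (c : ℝ≥0∞) * lam B ≤ κ x B)
    (f : E → ℝ) (hf : Measurable f) (C : ℝ) (hfb : ∀ x, |f x| ≤ C)
    (x₁ x₂ : E) :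
    (0 ≤ ((c : ℝ≥0∞) * lam Set.univ).toReal ∧ ((c : ℝ≥0∞) * lam Set.univ).toReal ≤ 1) ∧
      |(∫ y, f y ∂(κ x₁)) - ∫ y, f y ∂(κ x₂)| ≤
        (1 - ((c : ℝ≥0∞) * lam Set.univ).toReal) * ((⨆ x, f x) - ⨅ x, f x) := by
  have hle : ∀ x, c • lam ≤ κ x := fun x => Measure.le_iff.2 fun B hB => hdoeblin x B hB
  have hmass : (c • lam).real Set.univ = ((c : ℝ≥0∞) * lam Set.univ).toReal := rfl
  have hmass_le : (c • lam).real Set.univ ≤ 1 :=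
    (ENNReal.toReal_mono (measure_ne_top _ _) (hle x₁ Set.univ)).trans_eq probReal_univ
  have hbdd_above : BddAbove (Set.range f) := ⟨C, by rintro - ⟨x, rfl⟩; exact (abs_le.1 (hfb x)).2⟩
  have hbdd_below : BddBelow (Set.range f) := ⟨-C, by rintro - ⟨x, rfl⟩; exact (abs_le.1 (hfb x)).1⟩
  refine ⟨⟨ENNReal.toReal_nonneg, hmass ▸ hmass_le⟩, hmass ▸ ?_⟩
  exact abs_integral_sub_integral_le_of_le_of_le (hle x₁) (hle x₂) hf (ciInf_le hbdd_below)
    (le_ciSup hbdd_above)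

/-- Doeblin minorization: one-step contraction of the oscillation. If a Markov kernel `κ`
satisfies `κ x B ≥ c·λ(B)` for a constant `c > 0` and a nonzero finite measure `λ`, then
necessarily `0 ≤ c·λ(E) ≤ 1`, and for every bounded measurable `f` and all `x₁ x₂`,
`|κ f (x₁) - κ f (x₂)| ≤ (1 - c·λ(E)) · osc f`. -/
theorem stmt1 {E : Type*} [MeasurableSpace E]
    (κ : Kernel E E) [IsMarkovKernel κ]
    (c : ℝ≥0) (hc : 0 < c)
    (lam : Measure E) [IsFiniteMeasure lam] (hlam : lam ≠ 0)
    (hdoeblin : ∀ (x : E) (B : Set E), MeasurableSet B → (c : ℝ≥0∞) * lam B ≤ κ x B)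
    (f : E → ℝ) (hf : Measurable f) (C : ℝ) (hfb : ∀ x, |f x| ≤ C)
    (x₁ x₂ : E) :
    (0 ≤ ((c : ℝ≥0∞) * lam Set.univ).toReal ∧ ((c : ℝ≥0∞) * lam Set.univ).toReal ≤ 1) ∧
      |(∫ y, f y ∂(κ x₁)) - ∫ y, f y ∂(κ x₂)| ≤
        (1 - ((c : ℝ≥0∞) * lam Set.univ).toReal) * ((⨆ x, f x) - ⨅ x, f x) :=
  stmt1_general κ c lam hdoeblin f hf C hfb x₁ x₂
end

section
/- Let (E, 𝓔) be a measurable space and κ a Markov kernel on E satisfying a Doeblin minorization with constant c > 0 and nonzero finite measure λ. Then for every bounded measurable f : E → ℝ there exists a constant ū ∈ ℝ such that for all n ≥ 0 and all x ∈ E, |(κⁿ f)(x) − ū| ≤ (1 − c·λ(E))ⁿ · osc(f). In particular, the functions κⁿ f converge uniformly on E to the constant ū at a geometric rate. -/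
/-!
Under the minorization `κ x ≥ ρ := c • λ`, any two of the measures `κ x`, `κ y` share the mass
`ρ(E)`, so integrating a function with values in `[m, M]` against them gives results at most
`(1 - ρ(E)) (M - m)` apart. Hence `osc (κⁿ f) ≤ (1 - ρ(E))ⁿ osc f`, while `sup κⁿ f` decreases and
`inf κⁿ f` increases in `n`; any point `ū` common to the nested intervals `[inf κⁿ f, sup κⁿ f]`
is within `osc (κⁿ f)` of every value of `κⁿ f`.
-/

open MeasureTheory ProbabilityTheory
open scoped ENNReal NNReal

/-- The `n`-fold iterate of a Markov kernel. -/
noncomputable def iterK {E : Type*} [MeasurableSpace E] (κ : Kernel E E) : ℕ → Kernel E E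
  | 0 => Kernel.id
  | n + 1 => κ ∘ₖ iterK κ n

open Set

/-- Only meaningful for bounded `g`: otherwise `⨆` or `⨅` takes the junk value `0`. -/
noncomputable def osc {α : Type*} (g : α → ℝ) : ℝ := (⨆ x, g x) - ⨅ x, g x

lemma osc_le_of_forall_sub_le {α : Type*} [Nonempty α] {u : α → ℝ} {K : ℝ}
    (h : ∀ x y, u x - u y ≤ K) : osc u ≤ K := by
  have : (⨆ x, u x) ≤ K + ⨅ y, u y :=
    ciSup_le fun x => by
      have : u x - K ≤ ⨅ y, u y := le_ciInf fun y => by linarith [h x y]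
      linarith
  unfold osc
  linarith

lemma exists_forall_abs_sub_le_osc {α : Type*} [Nonempty α] (u : ℕ → α → ℝ)
    (hA : ∀ n, BddAbove (range (u n))) (hB : ∀ n, BddBelow (range (u n)))
    (hsup : Antitone fun n => ⨆ x, u n x) (hinf : Monotone fun n => ⨅ x, u n x) :
    ∃ c, ∀ n x, |u n x - c| ≤ osc (u n) := by
  have hc := hinf.ciSup_mem_iInter_Icc_of_antitone hsup fun n => ciInf_le_ciSup (hB n) (hA n)
  refine ⟨⨆ n, ⨅ x, u n x, fun n x => ?_⟩
  obtain ⟨hlo, hhi⟩ := mem_iInter.1 hc n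
  have hx₁ : ⨅ y, u n y ≤ u n x := ciInf_le (hB n) x
  have hx₂ : u n x ≤ ⨆ y, u n y := le_ciSup (hA n) x
  exact abs_sub_le_iff.2 ⟨by unfold osc; linarith, by unfold osc; linarith⟩

section Measure

variable {α : Type*} [MeasurableSpace α] {g : α → ℝ}

/-- Both measures contain `ρ`, so only their remaining mass `1 - ρ(α)` can tell them apart. -/
lemma integral_sub_integral_le_of_le_measure {μ ν ρ : Measure α} [IsProbabilityMeasure μ]
    [IsProbabilityMeasure ν] [IsFiniteMeasure ρ] (hρμ : ρ ≤ μ) (hρν : ρ ≤ ν)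
    (hg : Measurable g) {m M : ℝ} (hm : ∀ x, m ≤ g x) (hM : ∀ x, g x ≤ M) :
    ∫ x, g x ∂μ - ∫ x, g x ∂ν ≤ (1 - ρ.real univ) * (M - m) := by
  have hint : ∀ (μ : Measure α) [IsFiniteMeasure μ], Integrable g μ := fun μ _ =>
    .of_mem_Icc m M hg.aemeasurable (ae_of_all _ fun x => ⟨hm x, hM x⟩)
  have hlow : ∫ x, g x - m ∂ρ ≤ ∫ x, g x - m ∂ν :=
    integral_mono_measure hρν (ae_of_all _ fun x => sub_nonneg.2 (hm x))
      ((hint ν).sub (integrable_const m))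
  have hhigh : ∫ x, M - g x ∂ρ ≤ ∫ x, M - g x ∂μ :=
    integral_mono_measure hρμ (ae_of_all _ fun x => sub_nonneg.2 (hM x))
      ((integrable_const M).sub (hint μ))
  rw [integral_sub (hint _) (integrable_const _), integral_sub (hint _) (integrable_const _)]
    at hlow
  rw [integral_sub (integrable_const _) (hint _), integral_sub (integrable_const _) (hint _)]
    at hhigh
  simp only [integral_const, probReal_univ, smul_eq_mul, one_mul] at hlow hhigh
  linarith

lemma integrable_of_bddAbove_of_bddBelow {μ : Measure α} [IsFiniteMeasure μ]
    (hg : Measurable g) (hA : BddAbove (range g)) (hB : BddBelow (range g)) : Integrable g μ :=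
  .of_mem_Icc _ _ hg.aemeasurable (ae_of_all _ fun x => ⟨ciInf_le hB x, le_ciSup hA x⟩)

lemma integral_le_ciSup {μ : Measure α} [IsProbabilityMeasure μ] (hg : Measurable g)
    (hA : BddAbove (range g)) (hB : BddBelow (range g)) : ∫ x, g x ∂μ ≤ ⨆ x, g x := by
  simpa using integral_mono (integrable_of_bddAbove_of_bddBelow (μ := μ) hg hA hB) (integrable_const _)
    fun x => le_ciSup hA x

lemma ciInf_le_integral {μ : Measure α} [IsProbabilityMeasure μ] (hg : Measurable g)
    (hA : BddAbove (range g)) (hB : BddBelow (range g)) : ⨅ x, g x ≤ ∫ x, g x ∂μ := by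
  simpa using integral_mono (integrable_const _) (integrable_of_bddAbove_of_bddBelow (μ := μ) hg hA hB)
    fun x => ciInf_le hB x

end Measure

section Kernel

variable {α β : Type*} [MeasurableSpace α] [MeasurableSpace β] {κ : Kernel α β}
  [IsMarkovKernel κ] {g : β → ℝ}

lemma bddAbove_range_integral (hg : Measurable g) (hA : BddAbove (range g))
    (hB : BddBelow (range g)) : BddAbove (range fun x => ∫ y, g y ∂κ x) :=
  ⟨⨆ y, g y, forall_mem_range.2 fun _ => integral_le_ciSup hg hA hB⟩

lemma bddBelow_range_integral (hg : Measurable g) (hA : BddAbove (range g))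
    (hB : BddBelow (range g)) : BddBelow (range fun x => ∫ y, g y ∂κ x) :=
  ⟨⨅ y, g y, forall_mem_range.2 fun _ => ciInf_le_integral hg hA hB⟩

lemma ciSup_integral_le [Nonempty α] (hg : Measurable g) (hA : BddAbove (range g))
    (hB : BddBelow (range g)) : ⨆ x, ∫ y, g y ∂κ x ≤ ⨆ y, g y :=
  ciSup_le fun _ => integral_le_ciSup hg hA hB

lemma ciInf_le_ciInf_integral [Nonempty α] (hg : Measurable g) (hA : BddAbove (range g))
    (hB : BddBelow (range g)) : ⨅ y, g y ≤ ⨅ x, ∫ y, g y ∂κ x :=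
  le_ciInf fun _ => ciInf_le_integral hg hA hB

lemma measureReal_univ_le_one_of_le_kernel [Nonempty α] {ρ : Measure β} [IsFiniteMeasure ρ]
    (hρ : ∀ x, ρ ≤ κ x) : ρ.real univ ≤ 1 := by
  obtain ⟨x⟩ := ‹Nonempty α›
  rw [measureReal_def]
  simpa using ENNReal.toReal_mono (measure_ne_top _ _) (hρ x univ)

lemma osc_integral_le_of_le_kernel [Nonempty α] {ρ : Measure β} [IsFiniteMeasure ρ]
    (hρ : ∀ x, ρ ≤ κ x) (hg : Measurable g) (hA : BddAbove (range g))
    (hB : BddBelow (range g)) : osc (fun x => ∫ y, g y ∂κ x) ≤ (1 - ρ.real univ) * osc g :=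
  osc_le_of_forall_sub_le fun x y => integral_sub_integral_le_of_le_measure (hρ x) (hρ y) hg
    (fun z => ciInf_le hB z) (fun z => le_ciSup hA z)

end Kernel

section Iterate

variable {E : Type*} [MeasurableSpace E] {κ : Kernel E E} {f : E → ℝ}

lemma iterK_succ_eq_iterK_comp (n : ℕ) : iterK κ (n + 1) = iterK κ n ∘ₖ κ := by
  induction n with
  | zero => simp [iterK]
  | succ n ih =>
    change κ ∘ₖ iterK κ (n + 1) = (κ ∘ₖ iterK κ n) ∘ₖ κ
    rw [ih, Kernel.comp_assoc]

lemma integral_iterK_zero (hf : Measurable f) (x : E) : ∫ y, f y ∂iterK κ 0 x = f x := by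
  rw [iterK, Kernel.id_apply, integral_dirac' _ _ hf.stronglyMeasurable]

lemma measurable_integral_iterK (hf : Measurable f) (n : ℕ) :
    Measurable fun x => ∫ y, f y ∂iterK κ n x :=
  hf.stronglyMeasurable.integral_kernel.measurable

variable [IsMarkovKernel κ]

instance isMarkovKernel_iterK (n : ℕ) : IsMarkovKernel (iterK κ n) := by
  induction n with
  | zero => rw [iterK]; infer_instance
  | succ n ih => rw [iterK]; infer_instance

lemma integral_iterK_succ (hf : Measurable f) (hA : BddAbove (range f))
    (hB : BddBelow (range f)) (n : ℕ) (x : E) :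
    ∫ y, f y ∂iterK κ (n + 1) x = ∫ y, ∫ z, f z ∂iterK κ n y ∂κ x := by
  rw [iterK_succ_eq_iterK_comp, Kernel.integral_comp]
  exact integrable_of_bddAbove_of_bddBelow hf hA hB

variable [Nonempty E] (hf : Measurable f) (hA : BddAbove (range f)) (hB : BddBelow (range f))
include hf hA hB

lemma antitone_ciSup_integral_iterK : Antitone fun n => ⨆ x, ∫ y, f y ∂iterK κ n x :=
  antitone_nat_of_succ_le fun n => by
    simp_rw [integral_iterK_succ hf hA hB n]
    exact ciSup_integral_le (measurable_integral_iterK hf n) (bddAbove_range_integral hf hA hB)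
      (bddBelow_range_integral hf hA hB)

lemma monotone_ciInf_integral_iterK : Monotone fun n => ⨅ x, ∫ y, f y ∂iterK κ n x :=
  monotone_nat_of_le_succ fun n => by
    simp_rw [integral_iterK_succ hf hA hB n]
    exact ciInf_le_ciInf_integral (measurable_integral_iterK hf n)
      (bddAbove_range_integral hf hA hB) (bddBelow_range_integral hf hA hB)

lemma osc_integral_iterK_le {ρ : Measure E} [IsFiniteMeasure ρ] (hρ : ∀ x, ρ ≤ κ x) (n : ℕ) :
    osc (fun x => ∫ y, f y ∂iterK κ n x) ≤ (1 - ρ.real univ) ^ n * osc f := by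
  induction n with
  | zero => simp [integral_iterK_zero hf]
  | succ n ih =>
    simp_rw [integral_iterK_succ hf hA hB n]
    calc osc (fun x => ∫ y, ∫ z, f z ∂iterK κ n y ∂κ x)
        ≤ (1 - ρ.real univ) * osc (fun x => ∫ y, f y ∂iterK κ n x) :=
          osc_integral_le_of_le_kernel hρ (measurable_integral_iterK hf n)
            (bddAbove_range_integral hf hA hB) (bddBelow_range_integral hf hA hB)
      _ ≤ (1 - ρ.real univ) * ((1 - ρ.real univ) ^ n * osc f) :=
          mul_le_mul_of_nonneg_left ih (sub_nonneg.2 (measureReal_univ_le_one_of_le_kernel hρ))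
      _ = (1 - ρ.real univ) ^ (n + 1) * osc f := by ring

end Iterate

theorem stmt2_general {E : Type*} [MeasurableSpace E]
    (κ : Kernel E E) [IsMarkovKernel κ]
    (c : ℝ≥0)
    (lam : Measure E) [IsFiniteMeasure lam]
    (hdoeblin : ∀ (x : E) (B : Set E), MeasurableSet B → (c : ℝ≥0∞) * lam B ≤ κ x B)
    (f : E → ℝ) (hf : Measurable f) (C : ℝ) (hfb : ∀ x, |f x| ≤ C) :
    ∃ ubar : ℝ, ∀ (n : ℕ) (x : E),
      |(∫ y, f y ∂(iterK κ n x)) - ubar| ≤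
        (1 - ((c : ℝ≥0∞) * lam Set.univ).toReal) ^ n * ((⨆ x, f x) - ⨅ x, f x) := by
  rcases isEmpty_or_nonempty E with hE | hE
  · exact ⟨0, fun _ x => isEmptyElim x⟩
  have hρ : ∀ x, c • lam ≤ κ x := fun x => Measure.le_iff.2 fun B hB => by
    rw [Measure.smul_apply, ENNReal.smul_def, smul_eq_mul]
    exact hdoeblin x B hB
  have hA : BddAbove (range f) := ⟨C, forall_mem_range.2 fun x => (abs_le.1 (hfb x)).2⟩
  have hB : BddBelow (range f) := ⟨-C, forall_mem_range.2 fun x => (abs_le.1 (hfb x)).1⟩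
  obtain ⟨ubar, hubar⟩ := exists_forall_abs_sub_le_osc (fun n x => ∫ y, f y ∂iterK κ n x)
    (fun _ => bddAbove_range_integral hf hA hB) (fun _ => bddBelow_range_integral hf hA hB)
    (antitone_ciSup_integral_iterK hf hA hB) (monotone_ciInf_integral_iterK hf hA hB)
  refine ⟨ubar, fun n x => (hubar n x).trans ?_⟩
  have hρ_univ : (c • lam).real univ = ((c : ℝ≥0∞) * lam univ).toReal := by
    rw [measureReal_def, Measure.smul_apply, ENNReal.smul_def, smul_eq_mul]
  exact hρ_univ ▸ osc_integral_iterK_le hf hA hB hρ n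

/-- Under a Doeblin minorization with constant `c > 0` and nonzero finite measure `λ`,
for every bounded measurable `f` there is a constant `ū` with
`|κⁿ f (x) - ū| ≤ (1 - c·λ(E))ⁿ · osc f` for all `n` and `x`; i.e. `κⁿ f` converges
uniformly to the constant `ū` at a geometric rate. -/
theorem stmt2 {E : Type*} [MeasurableSpace E]
    (κ : Kernel E E) [IsMarkovKernel κ]
    (c : ℝ≥0) (hc : 0 < c)
    (lam : Measure E) [IsFiniteMeasure lam] (hlam : lam ≠ 0)
    (hdoeblin : ∀ (x : E) (B : Set E), MeasurableSet B → (c : ℝ≥0∞) * lam B ≤ κ x B)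
    (f : E → ℝ) (hf : Measurable f) (C : ℝ) (hfb : ∀ x, |f x| ≤ C) :
    ∃ ubar : ℝ, ∀ (n : ℕ) (x : E),
      |(∫ y, f y ∂(iterK κ n x)) - ubar| ≤
        (1 - ((c : ℝ≥0∞) * lam Set.univ).toReal) ^ n * ((⨆ x, f x) - ⨅ x, f x) :=
  stmt2_general κ c lam hdoeblin f hf C hfb
end

section
/- Let (E, 𝓔) be a measurable space and κ a Markov kernel on E satisfying a Doeblin minorization with constant c > 0 and nonzero finite measure λ, with c·λ(E) < 1 or c·λ(E) = 1. Then there exists a unique probability measure μ on E invariant for κ (i.e., ∫_E (κ x)(B) dμ(x) = μ(B) for all B ∈ 𝓔), and for every x ∈ E and n ≥ 0 the total variation distance between κⁿ(x, ·) and μ is at most 2·(1 − c·λ(E))ⁿ. Moreover, for every bounded measurable f, κⁿ f converges uniformly to the constant ∫_E f dμ. -/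
/-!
Let `ν = c • λ ≤ κ x` and `θ = ν(E)`. Then `κ = R + ν` for the residual kernel `R x = κ x - ν`,
of constant mass `1 - θ`, so one step from a probability measure `p` is `κ ∘ p = R ∘ p + ν`:
the part `ν` has forgotten `p`. Iterating, `κⁿ ∘ p = Rⁿ ∘ p + Pₙ` with `Pₙ` independent of `p`
and `Rⁿ ∘ p` of mass `(1 - θ)ⁿ`. Hence chains started from any two laws are `(1 - θ)ⁿ`-close
on sets, and `2 C (1 - θ)ⁿ`-close on test functions bounded by `C`; this gives both uniqueness
and the convergence rates. The invariant law is the regeneration series `μ = ∑ₖ Rᵏ ∘ ν`.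
-/

open MeasureTheory ProbabilityTheory
open scoped ENNReal NNReal

open Set

section Kernels

variable {E : Type*} [MeasurableSpace E]

lemma MeasureTheory.Measure.comp_apply_univ_eq_mul {α β : Type*} [MeasurableSpace α]
    [MeasurableSpace β] {η : Kernel α β} {r : ℝ≥0∞} (h : ∀ x, η x univ = r) (p : Measure α) :
    (η ∘ₘ p) univ = r * p univ := by
  simp [Measure.bind_apply MeasurableSet.univ η.aemeasurable, h]

lemma iterK_apply_univ {η : Kernel E E} {r : ℝ≥0∞} (h : ∀ x, η x univ = r) (n : ℕ) (x : E) :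
    iterK η n x univ = r ^ n := by
  induction n generalizing x with
  | zero => simp [iterK]
  | succ n ih =>
    rw [iterK, Kernel.comp_apply, Measure.comp_apply_univ_eq_mul h, ih, pow_succ']

instance iterK.isFiniteKernel (κ : Kernel E E) [IsFiniteKernel κ] :
    ∀ n, IsFiniteKernel (iterK κ n)
  | 0 => inferInstanceAs (IsFiniteKernel Kernel.id)
  | n + 1 => have := iterK.isFiniteKernel κ n; inferInstanceAs (IsFiniteKernel (κ ∘ₖ iterK κ n))

instance iterK.isMarkovKernel (κ : Kernel E E) [IsMarkovKernel κ] (n : ℕ) :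
    IsMarkovKernel (iterK κ n) :=
  ⟨fun x => ⟨by rw [iterK_apply_univ (fun x => measure_univ) n x, one_pow]⟩⟩

lemma ProbabilityTheory.Kernel.invariant_iff_forall_lintegral {κ : Kernel E E}
    {μ : Measure E} : κ.Invariant μ ↔ ∀ B, MeasurableSet B → ∫⁻ x, κ x B ∂μ = μ B := by
  rw [Kernel.Invariant, Measure.ext_iff]
  exact forall₂_congr fun B hB => by rw [Measure.bind_apply hB κ.aemeasurable]

lemma ProbabilityTheory.Kernel.Invariant.iterK {κ : Kernel E E} {μ : Measure E}
    (hκ : κ.Invariant μ) (n : ℕ) : (iterK κ n).Invariant μ := by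
  induction n with
  | zero => exact Measure.id_comp
  | succ n ih => exact hκ.comp ih

lemma measure_univ_le_one_of_le_kernel {κ : Kernel E E} [IsMarkovKernel κ] {ν : Measure E}
    (hν : ∀ x, ν ≤ κ x) : ν univ ≤ 1 := by
  rcases isEmpty_or_nonempty E with hE | ⟨⟨x⟩⟩
  · simp [univ_eq_empty_iff.2 hE]
  · exact measure_univ (μ := κ x) ▸ Measure.le_iff'.1 (hν x) univ

end Kernels

section Coupling

variable {Ω : Type*} [MeasurableSpace Ω] {α β π : Measure Ω}
  [IsFiniteMeasure α] [IsFiniteMeasure β] [IsFiniteMeasure π] {s : ℝ}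

lemma abs_measureReal_add_sub_add_le (hα : α.real univ = s) (hβ : β.real univ = s)
    (B : Set Ω) : |(α + π).real B - (β + π).real B| ≤ s := by
  rw [measureReal_add_apply, measureReal_add_apply, add_sub_add_right_eq_sub, abs_sub_le_iff]
  have hαB : α.real B ≤ s := hα ▸ measureReal_mono (subset_univ B)
  have hβB : β.real B ≤ s := hβ ▸ measureReal_mono (subset_univ B)
  constructor <;> linarith [measureReal_nonneg (μ := α) (s := B),
    measureReal_nonneg (μ := β) (s := B)]

lemma abs_integral_add_sub_add_le (hα : α.real univ = s) (hβ : β.real univ = s)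
    {f : Ω → ℝ} (hf : Measurable f) {C : ℝ} (hC : ∀ x, |f x| ≤ C) :
    |∫ x, f x ∂(α + π) - ∫ x, f x ∂(β + π)| ≤ 2 * C * s := by
  have hbound (ρ : Measure Ω) [IsFiniteMeasure ρ] : ‖∫ x, f x ∂ρ‖ ≤ C * ρ.real univ :=
    norm_integral_le_of_norm_le_const (ae_of_all _ hC)
  have hint (ρ : Measure Ω) [IsFiniteMeasure ρ] : Integrable f ρ :=
    .of_bound hf.aestronglyMeasurable C (ae_of_all _ hC)
  rw [integral_add_measure (hint α) (hint π), integral_add_measure (hint β) (hint π),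
    add_sub_add_right_eq_sub]
  calc |∫ x, f x ∂α - ∫ x, f x ∂β| ≤ ‖∫ x, f x ∂α‖ + ‖∫ x, f x ∂β‖ := abs_sub _ _
    _ ≤ C * α.real univ + C * β.real univ := add_le_add (hbound α) (hbound β)
    _ = 2 * C * s := by rw [hα, hβ]; ring

end Coupling

namespace Doeblin

variable {E : Type*} [MeasurableSpace E]

noncomputable def residual (κ : Kernel E E) (ν : Measure E) [IsFiniteMeasure ν]
    (hν : ∀ x, ν ≤ κ x) : Kernel E E where
  toFun x := κ x - ν
  measurable' := Measure.measurable_of_measurable_coe _ fun B hB => by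
    simp_rw [Measure.sub_apply hB (hν _)]
    exact (κ.measurable_coe hB).sub measurable_const

variable {κ : Kernel E E} {ν : Measure E} [IsFiniteMeasure ν] (hν : ∀ x, ν ≤ κ x)

noncomputable def invariantMeasure : Measure E :=
  Measure.sum fun k => iterK (residual κ ν hν) k ∘ₘ ν

include hν

lemma residual_add_const : residual κ ν hν + Kernel.const E ν = κ :=
  Kernel.ext fun x => Measure.sub_add_cancel_of_le (hν x)

lemma comp_eq_residual_comp_add (p : Measure E) [IsProbabilityMeasure p] :
    κ ∘ₘ p = residual κ ν hν ∘ₘ p + ν := by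
  conv_lhs => rw [← residual_add_const hν]
  rw [Measure.add_comp, Measure.const_comp, measure_univ, one_smul]

variable [IsMarkovKernel κ]

lemma residual_apply_univ (x : E) : residual κ ν hν x univ = 1 - ν univ := by
  rw [← measure_univ (μ := κ x)]
  exact Measure.sub_apply MeasurableSet.univ (hν x)

instance : IsFiniteKernel (residual κ ν hν) :=
  ⟨⟨1, ENNReal.one_lt_top, fun x => (residual_apply_univ hν x).le.trans tsub_le_self⟩⟩

lemma measureReal_iterK_residual_comp_univ (n : ℕ) (p : Measure E) [IsProbabilityMeasure p] :
    (iterK (residual κ ν hν) n ∘ₘ p).real univ = (1 - ν.real univ) ^ n := by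
  rw [measureReal_def, Measure.comp_apply_univ_eq_mul
      (iterK_apply_univ (residual_apply_univ hν) n), measure_univ (μ := p), mul_one,
    ENNReal.toReal_pow,
    ENNReal.toReal_sub_of_le (measure_univ_le_one_of_le_kernel hν) ENNReal.one_ne_top,
    ENNReal.toReal_one, measureReal_def]

lemma exists_iterK_comp_eq_add (n : ℕ) : ∃ P : Measure E, IsFiniteMeasure P ∧
    ∀ (p : Measure E) [IsProbabilityMeasure p],
      iterK κ n ∘ₘ p = iterK (residual κ ν hν) n ∘ₘ p + P := by
  induction n with
  | zero => exact ⟨0, inferInstance, fun p _ => (add_zero _).symm⟩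
  | succ n ih =>
    obtain ⟨P, _, hP⟩ := ih
    refine ⟨residual κ ν hν ∘ₘ P + ν, inferInstance, fun p _ => ?_⟩
    rw [iterK, iterK, ← Measure.comp_assoc, ← Measure.comp_assoc, comp_eq_residual_comp_add hν,
      hP, Measure.comp_add, add_assoc]

lemma abs_measureReal_iterK_comp_sub_le (n : ℕ) (p q : Measure E) [IsProbabilityMeasure p]
    [IsProbabilityMeasure q] (B : Set E) :
    |(iterK κ n ∘ₘ p).real B - (iterK κ n ∘ₘ q).real B| ≤ (1 - ν.real univ) ^ n := by
  obtain ⟨P, _, hP⟩ := exists_iterK_comp_eq_add hν n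
  rw [hP p, hP q]
  exact abs_measureReal_add_sub_add_le (measureReal_iterK_residual_comp_univ hν n p)
    (measureReal_iterK_residual_comp_univ hν n q) B

lemma abs_integral_iterK_comp_sub_le (n : ℕ) (p q : Measure E) [IsProbabilityMeasure p]
    [IsProbabilityMeasure q] {f : E → ℝ} (hf : Measurable f) {C : ℝ} (hC : ∀ x, |f x| ≤ C) :
    |∫ x, f x ∂(iterK κ n ∘ₘ p) - ∫ x, f x ∂(iterK κ n ∘ₘ q)| ≤
      2 * C * (1 - ν.real univ) ^ n := by
  obtain ⟨P, _, hP⟩ := exists_iterK_comp_eq_add hν n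
  rw [hP p, hP q]
  exact abs_integral_add_sub_add_le (measureReal_iterK_residual_comp_univ hν n p)
    (measureReal_iterK_residual_comp_univ hν n q) hf hC

lemma abs_measureReal_iterK_sub_le {q : Measure E} [IsProbabilityMeasure q]
    (hq : κ.Invariant q) (n : ℕ) (x : E) (B : Set E) :
    |(iterK κ n x).real B - q.real B| ≤ (1 - ν.real univ) ^ n := by
  simpa only [Measure.dirac_bind (iterK κ n).measurable, (hq.iterK n).def] using
    abs_measureReal_iterK_comp_sub_le hν n (Measure.dirac x) q B

variable (hν0 : ν ≠ 0)
include hν0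

lemma isProbabilityMeasure_invariantMeasure : IsProbabilityMeasure (invariantMeasure hν) := by
  constructor
  simp_rw [invariantMeasure, Measure.sum_apply _ MeasurableSet.univ,
    Measure.comp_apply_univ_eq_mul (iterK_apply_univ (residual_apply_univ hν) _)]
  rw [ENNReal.tsum_mul_right, ENNReal.tsum_geometric,
    ENNReal.sub_sub_cancel ENNReal.one_ne_top (measure_univ_le_one_of_le_kernel hν),
    ENNReal.inv_mul_cancel (Measure.measure_univ_ne_zero.2 hν0) (measure_ne_top _ _)]

lemma invariant_invariantMeasure : κ.Invariant (invariantMeasure hν) := by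
  have := isProbabilityMeasure_invariantMeasure hν hν0
  rw [Kernel.Invariant, comp_eq_residual_comp_add hν, invariantMeasure,
    Measure.bind_sum _ _ (residual κ ν hν).aemeasurable]
  ext B hB
  simp_rw [Measure.add_apply, Measure.sum_apply _ hB, Measure.comp_assoc]
  conv_rhs => rw [tsum_eq_zero_add' ENNReal.summable, add_comm]
  congr 1
  rw [iterK, Measure.id_comp]

lemma tendsto_one_sub_measureReal_univ_pow :
    Filter.Tendsto (fun n : ℕ => (1 - ν.real univ) ^ n) Filter.atTop (nhds 0) := by
  have hθ_pos : 0 < ν.real univ :=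
    ENNReal.toReal_pos (Measure.measure_univ_ne_zero.2 hν0) (measure_ne_top _ _)
  have hθ_le : ν.real univ ≤ 1 := ENNReal.toReal_le_of_le_ofReal zero_le_one
    ((measure_univ_le_one_of_le_kernel hν).trans_eq ENNReal.ofReal_one.symm)
  exact tendsto_pow_atTop_nhds_zero_of_lt_one (by linarith) (by linarith)

lemma eq_of_invariant {p q : Measure E} [IsProbabilityMeasure p] [IsProbabilityMeasure q]
    (hp : κ.Invariant p) (hq : κ.Invariant q) : p = q := by
  ext B hB
  have hbound (n : ℕ) : |p.real B - q.real B| ≤ (1 - ν.real univ) ^ n := by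
    simpa only [(hp.iterK n).def, (hq.iterK n).def] using
      abs_measureReal_iterK_comp_sub_le hν n p q B
  have hzero : |p.real B - q.real B| ≤ 0 :=
    ge_of_tendsto' (tendsto_one_sub_measureReal_univ_pow hν hν0) hbound
  rw [← ENNReal.toReal_eq_toReal_iff' (measure_ne_top _ _) (measure_ne_top _ _)]
  exact sub_eq_zero.1 (abs_nonpos_iff.1 hzero)

lemma tendstoUniformly_integral_iterK {q : Measure E} [IsProbabilityMeasure q]
    (hq : κ.Invariant q) {f : E → ℝ} (hf : Measurable f) {C : ℝ} (hC : ∀ x, |f x| ≤ C) :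
    TendstoUniformly (fun n x => ∫ y, f y ∂(iterK κ n x)) (fun _ => ∫ y, f y ∂q)
      Filter.atTop := by
  have hlim : Filter.Tendsto (fun n : ℕ => 2 * C * (1 - ν.real univ) ^ n) Filter.atTop
      (nhds 0) := by
    simpa using (tendsto_one_sub_measureReal_univ_pow hν hν0).const_mul (2 * C)
  rw [Metric.tendstoUniformly_iff]
  intro ε hε
  filter_upwards [hlim.eventually (gt_mem_nhds hε)] with n hn x
  refine lt_of_le_of_lt ?_ hn
  rw [Real.dist_eq, abs_sub_comm]
  simpa only [Measure.dirac_bind (iterK κ n).measurable, (hq.iterK n).def] using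
    abs_integral_iterK_comp_sub_le hν n (Measure.dirac x) q hf hC

end Doeblin

theorem stmt3_general {E : Type*} [MeasurableSpace E]
    (κ : Kernel E E) [IsMarkovKernel κ]
    (c : ℝ≥0) (hc : 0 < c)
    (lam : Measure E) [IsFiniteMeasure lam] (hlam : lam ≠ 0)
    (hdoeblin : ∀ (x : E) (B : Set E), MeasurableSet B → (c : ℝ≥0∞) * lam B ≤ κ x B) :
    ∃ μ : Measure E, IsProbabilityMeasure μ ∧
      (∀ B : Set E, MeasurableSet B → ∫⁻ x, κ x B ∂μ = μ B) ∧
      (∀ μ' : Measure E, IsProbabilityMeasure μ' →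
        (∀ B : Set E, MeasurableSet B → ∫⁻ x, κ x B ∂μ' = μ' B) → μ' = μ) ∧
      (∀ (x : E) (n : ℕ),
        2 * sSup {r : ℝ | ∃ B : Set E, MeasurableSet B ∧
            r = |((iterK κ n) x B).toReal - (μ B).toReal|} ≤
          2 * (1 - ((c : ℝ≥0∞) * lam Set.univ).toReal) ^ n) ∧
      (∀ f : E → ℝ, Measurable f → (∃ C, ∀ x, |f x| ≤ C) →
        TendstoUniformly (fun n x => ∫ y, f y ∂(iterK κ n x)) (fun _ => ∫ y, f y ∂μ)
          Filter.atTop) := by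
  have hsmul (B : Set E) : (c • lam) B = (c : ℝ≥0∞) * lam B := by
    rw [Measure.smul_apply, ENNReal.smul_def, smul_eq_mul]
  have hν : ∀ x, c • lam ≤ κ x := fun x =>
    Measure.le_iff.2 fun B hB => hsmul B ▸ hdoeblin x B hB
  have hν0 : c • lam ≠ 0 := smul_ne_zero hc.ne' hlam
  have := Doeblin.isProbabilityMeasure_invariantMeasure hν hν0
  have hinv := Doeblin.invariant_invariantMeasure hν hν0
  refine ⟨Doeblin.invariantMeasure hν, this, Kernel.invariant_iff_forall_lintegral.1 hinv,
    fun μ' _ hμ' => Doeblin.eq_of_invariant hν hν0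
      (Kernel.invariant_iff_forall_lintegral.2 hμ') hinv,
    fun x n => ?_,
    fun f hf ⟨C, hC⟩ => Doeblin.tendstoUniformly_integral_iterK hν hν0 hinv hf hC⟩
  rw [← hsmul]
  gcongr
  exact csSup_le ⟨_, ∅, .empty, rfl⟩ fun r ⟨B, _, hr⟩ =>
    hr ▸ Doeblin.abs_measureReal_iterK_sub_le hν hinv n x B

/-- Under a Doeblin minorization with constant `c > 0` and nonzero finite measure `λ`
(with `c·λ(E) < 1` or `c·λ(E) = 1`), there exists a unique invariant probability measure `μ`
for the kernel, the total variation distance between `κⁿ(x,·)` and `μ` is at most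
`2·(1 - c·λ(E))ⁿ`, and for every bounded measurable `f`, `κⁿ f` converges uniformly
to the constant `∫ f dμ`. -/
theorem stmt3 {E : Type*} [MeasurableSpace E]
    (κ : Kernel E E) [IsMarkovKernel κ]
    (c : ℝ≥0) (hc : 0 < c)
    (lam : Measure E) [IsFiniteMeasure lam] (hlam : lam ≠ 0)
    (hdoeblin : ∀ (x : E) (B : Set E), MeasurableSet B → (c : ℝ≥0∞) * lam B ≤ κ x B)
    (hone : ((c : ℝ≥0∞) * lam Set.univ).toReal < 1 ∨ ((c : ℝ≥0∞) * lam Set.univ).toReal = 1) :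
    ∃ μ : Measure E, IsProbabilityMeasure μ ∧
      (∀ B : Set E, MeasurableSet B → ∫⁻ x, κ x B ∂μ = μ B) ∧
      (∀ μ' : Measure E, IsProbabilityMeasure μ' →
        (∀ B : Set E, MeasurableSet B → ∫⁻ x, κ x B ∂μ' = μ' B) → μ' = μ) ∧
      (∀ (x : E) (n : ℕ),
        2 * sSup {r : ℝ | ∃ B : Set E, MeasurableSet B ∧
            r = |((iterK κ n) x B).toReal - (μ B).toReal|} ≤
          2 * (1 - ((c : ℝ≥0∞) * lam Set.univ).toReal) ^ n) ∧
      (∀ f : E → ℝ, Measurable f → (∃ C, ∀ x, |f x| ≤ C) →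
        TendstoUniformly (fun n x => ∫ y, f y ∂(iterK κ n x)) (fun _ => ∫ y, f y ∂μ)
          Filter.atTop) :=
  stmt3_general κ c hc lam hlam hdoeblin
end

section
/- Let κ be a Markov kernel on a measurable space (E, 𝓔), let (X_n)_{n≥0} be the canonical Markov chain with kernel κ started at x with law P_x, and let G ∈ 𝓔. Assume that for every x ∈ E the hitting time τ = inf{n ≥ 1 : X_n ∈ G} satisfies P_x(τ < ∞) = 1 and E_x[τ] < ∞. Define the return kernel Q on G by Q(x, B) = P_x(X_τ ∈ B) for x ∈ G and measurable B ⊆ G, and let P be a probability measure on G invariant for Q (∫_G Q(x, B) dP(x) = P(B) for all measurable B ⊆ G). Assume M := ∫_G E_x[τ] dP(x) < ∞. Then μ(A) := M^{−1} ∫_G E_x[ Σ_{n=0}^{τ−1} 1_A(X_n) ] dP(x), A ∈ 𝓔, defines a probability measure on E that is invariant for κ: ∫_E (κ x)(A) dμ(x) = μ(A) for every A ∈ 𝓔. -/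
open MeasureTheory ProbabilityTheory
open scoped ENNReal

/-- The hitting time `inf {n ≥ 1 : ω n ∈ G}` of a trajectory, as a natural number
(equal to `0` by convention if `G` is never hit after time `0`). -/
noncomputable def natHit {E : Type*} (G : Set E) (ω : ℕ → E) : ℕ :=
  sInf {n : ℕ | 1 ≤ n ∧ ω n ∈ G}

/-! Let `Q = ∫ P_x dPinv(x)` be the law of the chain started from `Pinv` and
`ν(A) = ∑ₙ Q(τ > n, Xₙ ∈ A)` its occupation measure before the return to `G`, so that
`ν(A) = E_Q[∑_{n<τ} 1_A(Xₙ)]`, `ν(E) = M` and `μ = M⁻¹ ν`. By the Markov property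
`∫ κ(·, A) dν = ∑ₙ Q(τ > n, Xₙ₊₁ ∈ A)`. The terms with `Xₙ₊₁ ∉ G` sum to `ν(A \ G)`, because
`X₀ ∈ G` makes the `n = 0` term of `ν(A \ G)` vanish; the terms with `Xₙ₊₁ ∈ G` are those with
`τ = n + 1` and sum to `Q(X_τ ∈ A ∩ G)`, which is `Pinv(A ∩ G) = ν(A ∩ G)` by invariance of
`Pinv` for the return kernel. -/

open Set

namespace MarkovCycle

section Paths

variable {E : Type*} {G B : Set E} {ω : ℕ → E} {n : ℕ}

/-- The event `τ > n`, stated without `natHit`, which is `0` on paths that never reach `G`. -/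
def noVisitUpTo (G : Set E) (n : ℕ) : Set (ℕ → E) := {ω | ∀ k, 1 ≤ k → k ≤ n → ω k ∉ G}

lemma noVisitUpTo_zero : noVisitUpTo G 0 = univ :=
  eq_univ_of_forall fun _ _ _ _ => by omega

lemma noVisitUpTo_succ :
    noVisitUpTo G (n + 1) = noVisitUpTo G n ∩ {ω | ω (n + 1) ∉ G} := by
  ext ω
  refine ⟨fun h => ⟨fun k hk hkn => h k hk (by omega), h (n + 1) (by omega) le_rfl⟩, ?_⟩
  rintro ⟨h, hn⟩ k hk hkn
  rcases Nat.lt_or_eq_of_le hkn with hkn | rfl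
  · exact h k hk (by omega)
  · exact hn

lemma one_le_natHit (hω : ∃ n, 1 ≤ n ∧ ω n ∈ G) : 1 ≤ natHit G ω :=
  (Nat.sInf_mem hω).1

lemma apply_natHit_mem (hω : ∃ n, 1 ≤ n ∧ ω n ∈ G) : ω (natHit G ω) ∈ G :=
  (Nat.sInf_mem hω).2

lemma mem_noVisitUpTo_iff_lt_natHit (hω : ∃ n, 1 ≤ n ∧ ω n ∈ G) :
    ω ∈ noVisitUpTo G n ↔ n < natHit G ω := by
  refine ⟨fun h => ?_, fun h k hk hkn hkG => ?_⟩
  · by_contra! hle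
    exact h _ (one_le_natHit hω) hle (apply_natHit_mem hω)
  · have : natHit G ω ≤ k := Nat.sInf_le ⟨hk, hkG⟩
    omega

lemma setOf_lt_natHit (n : ℕ) :
    {ω | n < natHit G ω} = noVisitUpTo G n ∩ {ω | ∃ n, 1 ≤ n ∧ ω n ∈ G} := by
  ext ω
  by_cases hω : ∃ n, 1 ≤ n ∧ ω n ∈ G
  · simp [mem_noVisitUpTo_iff_lt_natHit hω, hω]
  · have : natHit G ω = 0 := by
      rw [natHit, Nat.sInf_eq_zero]
      exact Or.inr (eq_empty_of_forall_notMem fun n hn => hω ⟨n, hn⟩)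
    simp [this, hω]

lemma mem_noVisitUpTo_inter_succ_iff (hω : ∃ n, 1 ≤ n ∧ ω n ∈ G) (hB : B ⊆ G) :
    ω ∈ noVisitUpTo G n ∩ {ω | ω (n + 1) ∈ B} ↔
      natHit G ω = n + 1 ∧ ω (natHit G ω) ∈ B := by
  rw [mem_inter_iff, mem_noVisitUpTo_iff_lt_natHit hω]
  refine ⟨fun ⟨hlt, hn⟩ => ?_, fun ⟨heq, hτ⟩ => ⟨by omega, heq ▸ hτ⟩⟩
  have : natHit G ω ≤ n + 1 := Nat.sInf_le ⟨by omega, hB hn⟩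
  exact ⟨by omega, by rwa [show natHit G ω = n + 1 by omega]⟩

variable [mE : MeasurableSpace E]

lemma measurableSet_noVisitUpTo_iSup (hG : MeasurableSet G) (n : ℕ) :
    MeasurableSet[⨆ i ∈ Finset.range (n + 1),
      MeasurableSpace.comap (fun ω : ℕ → E => ω i) mE] (noVisitUpTo G n) := by
  have hsub : ∀ k ≤ n, MeasurableSet[⨆ i ∈ Finset.range (n + 1),
      MeasurableSpace.comap (fun ω : ℕ → E => ω i) mE] {ω | ω k ∉ G} := fun k hk =>
    le_iSup₂ (f := fun i (_ : i ∈ Finset.range (n + 1)) =>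
      MeasurableSpace.comap (fun ω : ℕ → E => ω i) mE) k (Finset.mem_range.2 (by omega))
      _ ⟨Gᶜ, hG.compl, rfl⟩
  have : noVisitUpTo G n = ⋂ k ∈ Finset.Icc 1 n, {ω | ω k ∉ G} := by
    ext ω; simp [noVisitUpTo]
  rw [this]
  exact .biInter (Finset.countable_toSet _) fun k hk => hsub k (Finset.mem_Icc.1 hk).2

lemma measurableSet_noVisitUpTo (hG : MeasurableSet G) (n : ℕ) :
    MeasurableSet (noVisitUpTo G n) :=
  iSup₂_le (fun i _ => (measurable_pi_apply i).comap_le) _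
    (measurableSet_noVisitUpTo_iSup hG n)

lemma measurableSet_setOf_exists_mem (hG : MeasurableSet G) :
    MeasurableSet {ω : ℕ → E | ∃ n, 1 ≤ n ∧ ω n ∈ G} := by
  simp only [ofPred_exists, ofPred_and]
  exact .iUnion fun n => (MeasurableSet.const _).inter (measurable_pi_apply n hG)

lemma measurable_natHit (hG : MeasurableSet G) : Measurable (natHit G : (ℕ → E) → ℕ) :=
  measurable_of_Ioi fun n => by
    simpa only [preimage, mem_Ioi, setOf_lt_natHit] using
      (measurableSet_noVisitUpTo hG n).inter (measurableSet_setOf_exists_mem hG)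

lemma measurable_natHit_comp {β : Type*} [MeasurableSpace β] {g : ℕ → (ℕ → E) → β}
    (hG : MeasurableSet G) (hg : ∀ n, Measurable (g n)) :
    Measurable fun ω => g (natHit G ω) ω :=
  (measurable_from_prod_countable_left (f := fun p : (ℕ → E) × ℕ => g p.2 p.1) hg).comp
    (measurable_id.prodMk (measurable_natHit hG))

end Paths

section Occupation

variable {E : Type*} [MeasurableSpace E] {G A B : Set E}

noncomputable def occupation (G : Set E) (Q : Measure (ℕ → E)) : Measure E :=
  Measure.sum fun n => (Q.restrict (noVisitUpTo G n)).map (· n)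

variable {Q : Measure (ℕ → E)}

lemma lintegral_occupation {f : E → ℝ≥0∞} (hf : Measurable f) :
    ∫⁻ y, f y ∂occupation G Q = ∑' n, ∫⁻ ω in noVisitUpTo G n, f (ω n) ∂Q := by
  rw [occupation, lintegral_sum_measure]
  exact tsum_congr fun n => lintegral_map hf (measurable_pi_apply n)

lemma occupation_apply (hA : MeasurableSet A) :
    occupation G Q A = ∑' n, Q (noVisitUpTo G n ∩ {ω | ω n ∈ A}) := by
  rw [occupation, Measure.sum_apply _ hA]
  refine tsum_congr fun n => ?_
  rw [Measure.map_apply (measurable_pi_apply n) hA,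
    Measure.restrict_apply (measurable_pi_apply n hA), inter_comm]
  rfl

lemma measure_univ_le_occupation_univ :
    Q univ ≤ occupation G Q univ := by
  rw [occupation_apply .univ]
  simpa [noVisitUpTo_zero] using ENNReal.le_tsum (f := fun n =>
    Q (noVisitUpTo G n ∩ {ω | ω n ∈ univ})) 0

lemma occupation_apply_eq_lintegral (hG : MeasurableSet G) (hA : MeasurableSet A)
    (hhit : ∀ᵐ ω ∂Q, ∃ n, 1 ≤ n ∧ ω n ∈ G) :
    occupation G Q A = ∫⁻ ω, ∑ n ∈ Finset.range (natHit G ω),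
      A.indicator (fun _ => (1 : ℝ≥0∞)) (ω n) ∂Q := by
  have hmeas : ∀ n, MeasurableSet (noVisitUpTo G n ∩ {ω | ω n ∈ A}) := fun n =>
    (measurableSet_noVisitUpTo hG n).inter (measurable_pi_apply n hA)
  have hsum : ∀ᵐ ω ∂Q, ∑ n ∈ Finset.range (natHit G ω), A.indicator (fun _ => 1) (ω n) =
      ∑' n, (noVisitUpTo G n ∩ {ω | ω n ∈ A}).indicator (fun _ => (1 : ℝ≥0∞)) ω := by
    filter_upwards [hhit] with ω hω
    rw [tsum_eq_sum (s := Finset.range (natHit G ω)) fun n hn => indicator_of_notMem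
      (fun h => hn (Finset.mem_range.2 ((mem_noVisitUpTo_iff_lt_natHit hω).1 h.1))) _]
    refine Finset.sum_congr rfl fun n hn => ?_
    have hvis := (mem_noVisitUpTo_iff_lt_natHit (n := n) hω).2 (Finset.mem_range.1 hn)
    by_cases hnA : ω n ∈ A <;> simp [hnA, hvis]
  rw [lintegral_congr_ae hsum, lintegral_tsum fun n => (measurable_const.indicator
    (hmeas n)).aemeasurable, occupation_apply hA]
  exact tsum_congr fun n => (lintegral_indicator_one (hmeas n)).symm

lemma occupation_inter (hG : MeasurableSet G) (hA : MeasurableSet A) :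
    occupation G Q (A ∩ G) = Q {ω | ω 0 ∈ A ∩ G} := by
  rw [occupation_apply (hA.inter hG), tsum_eq_single 0 fun n hn => ?_, noVisitUpTo_zero,
    univ_inter]
  convert measure_empty (μ := Q)
  exact eq_empty_of_forall_notMem fun ω hω => hω.1 n (by omega) le_rfl hω.2.2

lemma occupation_sdiff (hG : MeasurableSet G) (hA : MeasurableSet A)
    (hstart : ∀ᵐ ω ∂Q, ω 0 ∈ G) :
    occupation G Q (A \ G) = ∑' n, Q (noVisitUpTo G (n + 1) ∩ {ω | ω (n + 1) ∈ A \ G}) := by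
  have h0 : Q (noVisitUpTo G 0 ∩ {ω | ω 0 ∈ A \ G}) = 0 :=
    measure_mono_null (fun ω hω => hω.2.2) (ae_iff.1 hstart)
  rw [occupation_apply (hA.diff hG), tsum_eq_zero_add' ENNReal.summable, h0, zero_add]

lemma measure_noVisitUpTo_inter_succ_eq_add (hG : MeasurableSet G) (hA : MeasurableSet A)
    (n : ℕ) : Q (noVisitUpTo G n ∩ {ω | ω (n + 1) ∈ A}) =
      Q (noVisitUpTo G (n + 1) ∩ {ω | ω (n + 1) ∈ A \ G}) +
        Q (noVisitUpTo G n ∩ {ω | ω (n + 1) ∈ A ∩ G}) := by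
  have hmeas : MeasurableSet (noVisitUpTo G n ∩ {ω | ω (n + 1) ∈ A ∩ G}) :=
    (measurableSet_noVisitUpTo hG n).inter (measurable_pi_apply (n + 1) (hA.inter hG))
  rw [← measure_union _ hmeas]
  · congr 1
    ext ω
    simp only [noVisitUpTo_succ, mem_inter_iff, mem_union, mem_ofPred_eq, mem_sdiff]
    tauto
  · exact disjoint_left.2 fun ω h₁ h₂ => h₁.2.2 h₂.2.2

lemma tsum_measure_noVisitUpTo_inter_succ (hG : MeasurableSet G) (hB : MeasurableSet B)
    (hBG : B ⊆ G) (hhit : ∀ᵐ ω ∂Q, ∃ n, 1 ≤ n ∧ ω n ∈ G) :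
    ∑' n, Q (noVisitUpTo G n ∩ {ω | ω (n + 1) ∈ B}) = Q {ω | ω (natHit G ω) ∈ B} := by
  have hmeas : ∀ n, MeasurableSet (noVisitUpTo G n ∩ {ω | ω (n + 1) ∈ B}) := fun n =>
    (measurableSet_noVisitUpTo hG n).inter (measurable_pi_apply (n + 1) hB)
  have hdisj :
      Pairwise (Function.onFun Disjoint fun n => noVisitUpTo G n ∩ {ω | ω (n + 1) ∈ B}) :=
    (pairwise_disjoint_on _).2 fun m n hmn => disjoint_left.2 fun ω hm hn =>
      hn.1 (m + 1) (by omega) (by omega) (hBG hm.2)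
  have hunion : (⋃ n, noVisitUpTo G n ∩ {ω | ω (n + 1) ∈ B}) =ᵐ[Q]
      {ω | ω (natHit G ω) ∈ B} := by
    refine Filter.eventuallyEq_set.2 ?_
    filter_upwards [hhit] with ω hω
    simp_rw [mem_iUnion, mem_noVisitUpTo_inter_succ_iff hω hBG]
    exact ⟨fun ⟨_, _, h⟩ => h, fun h => ⟨natHit G ω - 1, by have := one_le_natHit hω; omega, h⟩⟩
  rw [← measure_iUnion hdisj hmeas, measure_congr hunion]

theorem lintegral_kernel_occupation (κ : Kernel E E) (hG : MeasurableSet G)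
    (hA : MeasurableSet A) (hhit : ∀ᵐ ω ∂Q, ∃ n, 1 ≤ n ∧ ω n ∈ G)
    (hstart : ∀ᵐ ω ∂Q, ω 0 ∈ G)
    (hcycle : ∀ B, MeasurableSet B → B ⊆ G → Q {ω | ω (natHit G ω) ∈ B} = Q {ω | ω 0 ∈ B})
    (hstep : ∀ n, ∫⁻ ω in noVisitUpTo G n, κ (ω n) A ∂Q =
      Q (noVisitUpTo G n ∩ {ω | ω (n + 1) ∈ A})) :
    ∫⁻ y, κ y A ∂occupation G Q = occupation G Q A := by
  calc ∫⁻ y, κ y A ∂occupation G Q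
      = ∑' n, Q (noVisitUpTo G n ∩ {ω | ω (n + 1) ∈ A}) := by
        rw [lintegral_occupation (κ.measurable_coe hA)]
        exact tsum_congr hstep
    _ = ∑' n, Q (noVisitUpTo G (n + 1) ∩ {ω | ω (n + 1) ∈ A \ G}) +
          ∑' n, Q (noVisitUpTo G n ∩ {ω | ω (n + 1) ∈ A ∩ G}) := by
        simp_rw [measure_noVisitUpTo_inter_succ_eq_add hG hA]
        exact ENNReal.tsum_add
    _ = occupation G Q (A \ G) + occupation G Q (A ∩ G) := by
        rw [occupation_sdiff hG hA hstart, occupation_inter hG hA,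
          tsum_measure_noVisitUpTo_inter_succ hG (hA.inter hG) inter_subset_right hhit,
          hcycle _ (hA.inter hG) inter_subset_right]
    _ = occupation G Q A := by
        rw [add_comm, measure_inter_add_sdiff _ hG]

end Occupation

section Bind

variable {α β : Type*} [MeasurableSpace α] [MeasurableSpace β] {m : Measure α}
  {P : α → Measure β}

lemma ae_mem_bind (hP : Measurable P) {s : Set β} (hs : MeasurableSet s)
    (h : ∀ a, ∀ᵐ b ∂P a, b ∈ s) : ∀ᵐ b ∂m.bind P, b ∈ s := by
  refine ae_iff.2 ?_
  rw [← compl_def, Measure.bind_apply hs.compl hP.aemeasurable]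
  exact lintegral_eq_zero_of_ae_eq_zero (.of_forall fun a => ae_iff.1 (h a))

lemma setLIntegral_bind (hP : Measurable P) {s : Set β} (hs : MeasurableSet s)
    {f : β → ℝ≥0∞} (hf : Measurable f) :
    ∫⁻ b in s, f b ∂m.bind P = ∫⁻ a, ∫⁻ b in s, f b ∂P a ∂m := by
  simp_rw [← lintegral_indicator hs]
  exact Measure.lintegral_bind hP.aemeasurable (hf.indicator hs).aemeasurable

end Bind

section CanonicalChain

variable {E : Type*} [MeasurableSpace E] {G A B : Set E} {P : E → Measure (ℕ → E)}
  {m : Measure E}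

lemma measure_setOf_apply_zero_mem {ν : Measure (ℕ → E)} [IsProbabilityMeasure ν] {x : E}
    (hx : ν {ω | ω 0 = x} = 1) (hB : MeasurableSet B) :
    ν {ω | ω 0 ∈ B} = B.indicator (fun _ => 1) x := by
  have h_one : ∀ {C : Set E}, x ∈ C → ν {ω | ω 0 ∈ C} = 1 := fun hC =>
    le_antisymm prob_le_one (hx ▸ measure_mono fun ω (hω : ω 0 = x) =>
      show ω 0 ∈ _ from hω ▸ hC)
  by_cases hxB : x ∈ B
  · rw [indicator_of_mem hxB, h_one hxB]
  · have hmeas : MeasurableSet {ω : ℕ → E | ω 0 ∈ B} := measurable_pi_apply 0 hB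
    rw [indicator_of_notMem hxB, ← prob_compl_eq_one_iff hmeas]
    exact h_one (C := Bᶜ) hxB

lemma bind_apply_setOf_apply_zero_mem (hP : Measurable P)
    (hPprob : ∀ x, IsProbabilityMeasure (P x)) (hinit : ∀ x, P x {ω | ω 0 = x} = 1)
    (hB : MeasurableSet B) : m.bind P {ω | ω 0 ∈ B} = m B := by
  have hmeas : MeasurableSet {ω : ℕ → E | ω 0 ∈ B} := measurable_pi_apply 0 hB
  rw [Measure.bind_apply hmeas hP.aemeasurable, ← lintegral_indicator_one hB]
  exact lintegral_congr fun x =>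
    have := hPprob x
    measure_setOf_apply_zero_mem (hinit x) hB

lemma setLIntegral_noVisitUpTo_bind (κ : Kernel E E) (hP : Measurable P)
    (hG : MeasurableSet G) (hA : MeasurableSet A) (n : ℕ)
    (hMarkov : ∀ x, P x (noVisitUpTo G n ∩ {ω | ω (n + 1) ∈ A}) =
      ∫⁻ ω in noVisitUpTo G n, κ (ω n) A ∂P x) :
    ∫⁻ ω in noVisitUpTo G n, κ (ω n) A ∂m.bind P =
      m.bind P (noVisitUpTo G n ∩ {ω | ω (n + 1) ∈ A}) := by
  have hκ : Measurable fun ω : ℕ → E => κ (ω n) A :=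
    (κ.measurable_coe hA).comp (measurable_pi_apply n)
  have hmeas : MeasurableSet (noVisitUpTo G n ∩ {ω | ω (n + 1) ∈ A}) :=
    (measurableSet_noVisitUpTo hG n).inter (measurable_pi_apply (n + 1) hA)
  rw [setLIntegral_bind hP (measurableSet_noVisitUpTo hG n) hκ,
    Measure.bind_apply hmeas hP.aemeasurable]
  exact lintegral_congr fun x => (hMarkov x).symm

lemma lintegral_lintegral_sum_range_natHit (hP : Measurable P) (hG : MeasurableSet G)
    (hA : MeasurableSet A) (hhit : ∀ᵐ ω ∂m.bind P, ∃ n, 1 ≤ n ∧ ω n ∈ G) :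
    ∫⁻ x, (∫⁻ ω, (∑ n ∈ Finset.range (natHit G ω),
      A.indicator (fun _ => (1 : ℝ≥0∞)) (ω n)) ∂(P x)) ∂m = occupation G (m.bind P) A := by
  have hmeas : Measurable fun ω : ℕ → E => ∑ n ∈ Finset.range (natHit G ω),
      A.indicator (fun _ => (1 : ℝ≥0∞)) (ω n) :=
    measurable_natHit_comp hG fun k => Finset.measurable_sum _ fun n _ =>
      (measurable_const.indicator hA).comp (measurable_pi_apply n)
  rw [occupation_apply_eq_lintegral hG hA hhit,
    Measure.lintegral_bind hP.aemeasurable hmeas.aemeasurable]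

end CanonicalChain

end MarkovCycle

open MarkovCycle

theorem stmt10_general {E : Type*} [mE : MeasurableSpace E]
    (κ : Kernel E E)
    (P : E → Measure (ℕ → E)) (hPmeas : Measurable P)
    (hPprob : ∀ x, IsProbabilityMeasure (P x))
    (hinit : ∀ x, P x {ω | ω 0 = x} = 1)
    (hMarkov : ∀ (x : E) (n : ℕ) (B : Set E), MeasurableSet B →
      ∀ C : Set (ℕ → E),
        MeasurableSet[⨆ i ∈ Finset.range (n + 1),
          MeasurableSpace.comap (fun ω : ℕ → E => ω i) mE] C →
        P x (C ∩ {ω | ω (n + 1) ∈ B}) = ∫⁻ ω in C, κ (ω n) B ∂(P x))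
    (G : Set E) (hG : MeasurableSet G)
    (hfin : ∀ x, P x {ω | ∃ n, 1 ≤ n ∧ ω n ∈ G} = 1)
    (Pinv : Measure E) [IsProbabilityMeasure Pinv] (hPinvG : Pinv G = 1)
    (hinv : ∀ B : Set E, MeasurableSet B → B ⊆ G →
      ∫⁻ x, P x {ω | ω (natHit G ω) ∈ B} ∂Pinv = Pinv B)
    (M : ℝ≥0∞) (hM : M = ∫⁻ x, (∫⁻ ω, (natHit G ω : ℝ≥0∞) ∂(P x)) ∂Pinv)
    (hMfin : M < ⊤) :
    ∃ μ : Measure E, IsProbabilityMeasure μ ∧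
      (∀ A : Set E, MeasurableSet A →
        μ A = M⁻¹ * ∫⁻ x, (∫⁻ ω, (∑ n ∈ Finset.range (natHit G ω),
          A.indicator (fun _ => (1 : ℝ≥0∞)) (ω n)) ∂(P x)) ∂Pinv) ∧
      (∀ A : Set E, MeasurableSet A → ∫⁻ x, κ x A ∂μ = μ A) := by
  set Q := Pinv.bind P
  have hQ₀ : ∀ {B}, MeasurableSet B → Q {ω | ω 0 ∈ B} = Pinv B :=
    bind_apply_setOf_apply_zero_mem hPmeas hPprob hinit
  have hhit : ∀ᵐ ω ∂Q, ∃ n, 1 ≤ n ∧ ω n ∈ G :=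
    ae_mem_bind hPmeas (measurableSet_setOf_exists_mem hG) fun x =>
      have := hPprob x
      (ae_mem_iff_measure_eq (measurableSet_setOf_exists_mem hG).nullMeasurableSet).2
        ((hfin x).trans measure_univ.symm)
  have hstart : ∀ᵐ ω ∂Q, ω 0 ∈ G :=
    ae_iff.2 ((hQ₀ hG.compl).trans ((prob_compl_eq_zero_iff hG).2 hPinvG))
  have hcycle : ∀ B, MeasurableSet B → B ⊆ G →
      Q {ω | ω (natHit G ω) ∈ B} = Q {ω | ω 0 ∈ B} := fun B hB hBG => by
    have hmeas : MeasurableSet {ω : ℕ → E | ω (natHit G ω) ∈ B} :=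
      measurable_natHit_comp hG measurable_pi_apply hB
    rw [Measure.bind_apply hmeas hPmeas.aemeasurable, hinv B hB hBG, hQ₀ hB]
  have hM_eq : M = occupation G Q univ :=
    hM.trans <| by simpa using lintegral_lintegral_sum_range_natHit hPmeas hG .univ hhit
  have hM_ne : M ≠ 0 := by
    have hQ_univ : Q univ = 1 := by simpa using hQ₀ MeasurableSet.univ
    exact (zero_lt_one.trans_le (hQ_univ ▸ hM_eq ▸ measure_univ_le_occupation_univ)).ne'
  refine ⟨M⁻¹ • occupation G Q, ⟨?_⟩, fun A hA => ?_, fun A hA => ?_⟩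
  · rw [Measure.smul_apply, ← hM_eq, smul_eq_mul, ENNReal.inv_mul_cancel hM_ne hMfin.ne]
  · rw [Measure.smul_apply, smul_eq_mul, lintegral_lintegral_sum_range_natHit hPmeas hG hA hhit]
  · rw [lintegral_smul_measure, Measure.smul_apply,
      lintegral_kernel_occupation κ hG hA hhit hstart hcycle fun n =>
        setLIntegral_noVisitUpTo_bind κ hPmeas hG hA n fun x =>
          hMarkov x n A hA _ (measurableSet_noVisitUpTo_iSup hG n)]

/-- Kac-type formula: for the canonical Markov chain with kernel `κ` (laws `P x`,
characterized by the initial condition and the Markov property), if the return time `τ`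
to `G` is a.s. finite with finite expectation from every starting point, and `P` is a
probability measure on `G` invariant for the return kernel `Q(x,B) = P_x(X_τ ∈ B)`, with
`M = ∫_G E_x[τ] dP(x) < ∞`, then
`μ(A) = M⁻¹ ∫_G E_x[Σ_{n=0}^{τ-1} 1_A(X n)] dP(x)` defines a probability measure
invariant for `κ`. -/
theorem stmt10 {E : Type*} [mE : MeasurableSpace E]
    (κ : Kernel E E) [IsMarkovKernel κ]
    (P : E → Measure (ℕ → E)) (hPmeas : Measurable P)
    (hPprob : ∀ x, IsProbabilityMeasure (P x))
    (hinit : ∀ x, P x {ω | ω 0 = x} = 1)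
    (hMarkov : ∀ (x : E) (n : ℕ) (B : Set E), MeasurableSet B →
      ∀ C : Set (ℕ → E),
        MeasurableSet[⨆ i ∈ Finset.range (n + 1),
          MeasurableSpace.comap (fun ω : ℕ → E => ω i) mE] C →
        P x (C ∩ {ω | ω (n + 1) ∈ B}) = ∫⁻ ω in C, κ (ω n) B ∂(P x))
    (G : Set E) (hG : MeasurableSet G)
    (hfin : ∀ x, P x {ω | ∃ n, 1 ≤ n ∧ ω n ∈ G} = 1)
    (hEfin : ∀ x, ∫⁻ ω, (natHit G ω : ℝ≥0∞) ∂(P x) < ⊤)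
    (Pinv : Measure E) [IsProbabilityMeasure Pinv] (hPinvG : Pinv G = 1)
    (hinv : ∀ B : Set E, MeasurableSet B → B ⊆ G →
      ∫⁻ x, P x {ω | ω (natHit G ω) ∈ B} ∂Pinv = Pinv B)
    (M : ℝ≥0∞) (hM : M = ∫⁻ x, (∫⁻ ω, (natHit G ω : ℝ≥0∞) ∂(P x)) ∂Pinv)
    (hMfin : M < ⊤) :
    ∃ μ : Measure E, IsProbabilityMeasure μ ∧
      (∀ A : Set E, MeasurableSet A →
        μ A = M⁻¹ * ∫⁻ x, (∫⁻ ω, (∑ n ∈ Finset.range (natHit G ω),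
          A.indicator (fun _ => (1 : ℝ≥0∞)) (ω n)) ∂(P x)) ∂Pinv) ∧
      (∀ A : Set E, MeasurableSet A → ∫⁻ x, κ x A ∂μ = μ A) :=
  stmt10_general (mE := mE) κ P hPmeas hPprob hinit hMarkov G hG hfin Pinv hPinvG hinv M hM hMfin
end
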